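/- For n ≥ 4, if n is even and n is not of the form 2^m − 1 or 2^m − 3, then det(FQ_n) = ⌈lg(n+1)⌉ + 1. -/

import Mathlib

/-- `S` is a determining set for `G`: the only automorphism fixing `S` pointwise
is the identity. -/
def IsDeterminingSet {V : Type*} (G : SimpleGraph V) (S : Set V) : Prop :=
  ∀ φ : G ≃g G, (∀ v ∈ S, φ v = v) → ∀ v, φ v = v

/-- The determining number: minimum size of a determining set. -/
noncomputable def detNum {V : Type*} (G : SimpleGraph V) : ℕ :=
  sInf {r | ∃ S : Set V, S.ncard = r ∧ IsDeterminingSet G S}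

/-- A coloring is distinguishing if the only automorphism preserving all color
classes is the identity. -/
def IsDistinguishing {V : Type*} (G : SimpleGraph V) {d : ℕ} (c : V → Fin d) : Prop :=
  ∀ φ : G ≃g G, (∀ v, c (φ v) = c v) → ∀ v, φ v = v

/-- The distinguishing number: least `d` admitting a distinguishing `d`-coloring. -/
noncomputable def distNum {V : Type*} (G : SimpleGraph V) : ℕ :=
  sInf {d | ∃ c : V → Fin d, IsDistinguishing G c}

/-- `S` is a color class of a 2-distinguishing coloring: every automorphism
preserving `S` setwise is the identity. -/
def IsDistClass {V : Type*} (G : SimpleGraph V) (S : Set V) : Prop :=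
  ∀ φ : G ≃g G, (∀ v, φ v ∈ S ↔ v ∈ S) → ∀ v, φ v = v

/-- The cost of 2-distinguishing: minimum size of a color class over all
2-distinguishing colorings. -/
noncomputable def costNum {V : Type*} (G : SimpleGraph V) : ℕ :=
  sInf {m | ∃ S : Set V, S.ncard = m ∧ IsDistClass G S}

/-- The folded hypercube `FQ_n`: binary `n`-vectors, adjacent iff their Hamming
distance is 1 or `n`. -/
def FQ (n : ℕ) : SimpleGraph (Fin n → ZMod 2) :=
  SimpleGraph.fromRel (fun x y => hammingDist x y = 1 ∨ hammingDist x y = n)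

/-!
`FQ n` is the quotient of the `(n + 1)`-cube by the antipodal map `v ↦ v + 1`, i.e. the Cayley
graph of `(ZMod 2)ⁿ` whose generators `gen i` are the images of the `n + 1` unit vectors of the
cube. For `n ≥ 4` two distinct neighbours `y + gen j`, `y + gen j'` of `y` have exactly the common
neighbours `y` and `y + gen j + gen j'`; by induction on the number of generators summing to a
vertex, an automorphism fixing `0` and every `gen i` is the identity. Hence the stabiliser of `0`
is the symmetric group on the `n + 1` cube coordinates.

Lower bound: translate a determining set `S` so that it contains `0`. If `2 ^ (|S| - 1) < n + 1`,
two cube coordinates take the same values on the lifts of all points of `S \ {0}`, and their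
transposition fixes `S` pointwise but moves a generator.

Upper bound: take `0` and the images of the `⌈lg (n + 1)⌉` binary-digit vectors of the cube. A
coordinate permutation fixing the image of a digit vector `w` maps `w` to `w` or to `w + 1`, and the
latter is impossible as the weight `n + 1 - |w|` of `w + 1` differs from `|w|` when `n + 1` is odd.
So the permutation preserves the binary expansion of every coordinate and is the identity.
-/

open Finset

lemma zmod_two_ne_zero_iff_eq_one {a : ZMod 2} : a ≠ 0 ↔ a = 1 := by
  revert a; decide

lemma exists_notMem_of_card_lt {α : Type*} [Fintype α] {s : Finset α}
    (h : #s < Fintype.card α) : ∃ a, a ∉ s := by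
  simpa [eq_univ_iff_forall] using (card_lt_iff_ne_univ s).mp h

lemma hammingNorm_eq_one_iff {ι : Type*} [Fintype ι] [DecidableEq ι] {x : ι → ZMod 2} :
    hammingNorm x = 1 ↔ ∃ i, x = Pi.single i 1 := by
  simp only [hammingNorm, card_eq_one, Finset.ext_iff, mem_filter, mem_univ, true_and,
    mem_singleton, funext_iff, Pi.single_apply, zmod_two_ne_zero_iff_eq_one]
  refine exists_congr fun a => forall_congr' fun i => ?_
  by_cases h : i = a <;> simp only [h, if_true, if_false, iff_true, iff_false]
  generalize x i = b; revert b; decide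

lemma hammingNorm_eq_card_iff {ι : Type*} [Fintype ι] {x : ι → ZMod 2} :
    hammingNorm x = Fintype.card ι ↔ x = 1 := by
  simp [hammingNorm, card_eq_iff_eq_univ, filter_eq_self, funext_iff,
    zmod_two_ne_zero_iff_eq_one]

lemma hammingNorm_comp_equiv {ι ι' β : Type*} [Fintype ι] [Fintype ι'] [DecidableEq β]
    [Zero β] (x : ι → β) (σ : ι' ≃ ι) : hammingNorm (x ∘ σ) = hammingNorm x :=
  card_equiv σ (by simp)

lemma hammingNorm_add_one_add_hammingNorm {ι : Type*} [Fintype ι] (x : ι → ZMod 2) :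
    hammingNorm (x + 1) + hammingNorm x = Fintype.card ι := by
  rw [add_comm, hammingNorm, hammingNorm, ← card_univ,
    ← card_filter_add_card_filter_not (s := univ) (fun i => x i ≠ 0)]
  congr 2
  ext i
  simp only [mem_filter, mem_univ, true_and, Pi.add_apply, Pi.one_apply]
  generalize x i = a; revert a; decide

lemma comp_ne_add_one {ι : Type*} [Fintype ι] (hι : Odd (Fintype.card ι)) (x : ι → ZMod 2)
    (σ : Equiv.Perm ι) : x ∘ σ ≠ x + 1 := by
  intro h
  have := hammingNorm_add_one_add_hammingNorm x
  rw [← h, hammingNorm_comp_equiv] at this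
  obtain ⟨k, hk⟩ := hι
  omega

lemma comp_swap_eq_self {α β : Type*} [DecidableEq α] {f : α → β} {a b : α}
    (h : f a = f b) : f ∘ Equiv.swap a b = f := by
  rw [Equiv.comp_swap_eq_update, h, Function.update_eq_self, ← h, Function.update_eq_self]

lemma IsDeterminingSet.image {V : Type*} {G : SimpleGraph V} {S : Set V}
    (hS : IsDeterminingSet G S) (f : G ≃g G) : IsDeterminingSet G (f '' S) := by
  intro φ hφ v
  have h := hS (f.trans (φ.trans f.symm)) (fun s hs => by
    simp [hφ (f s) (Set.mem_image_of_mem f hs)]) (f.symm v)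
  simpa [RelIso.symm_apply_eq] using h

lemma detNum_eq_of_le_of_forall_le {V : Type*} {G : SimpleGraph V} {S : Set V} {d : ℕ}
    (hS : IsDeterminingSet G S) (hSd : S.ncard ≤ d)
    (hd : ∀ T, IsDeterminingSet G T → d ≤ T.ncard) : detNum G = d := by
  unfold detNum
  apply le_antisymm
  · refine (Nat.sInf_le ?_).trans hSd
    exact ⟨S, rfl, hS⟩
  · refine le_csInf ⟨_, S, rfl, hS⟩ ?_
    rintro r ⟨T, rfl, hT⟩
    exact hd T hT

namespace FoldedCube

variable {n : ℕ}

/-- The quotient map from the `(n + 1)`-cube onto the vertices of `FQ n`, with kernel `{0, 1}`. -/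
def pr : (Fin (n + 1) → ZMod 2) →+ (Fin n → ZMod 2) where
  toFun v i := v i.castSucc - v (Fin.last n)
  map_zero' := by ext; simp
  map_add' v w := by ext; simp only [Pi.add_apply]; abel

def lift : (Fin n → ZMod 2) →+ (Fin (n + 1) → ZMod 2) where
  toFun x := Fin.snoc x 0
  map_zero' := by ext i; cases i using Fin.lastCases <;> simp
  map_add' x y := by ext i; cases i using Fin.lastCases <;> simp

lemma pr_apply (v : Fin (n + 1) → ZMod 2) (i : Fin n) :
    pr v i = v i.castSucc - v (Fin.last n) := rfl

@[simp]
lemma pr_lift (x : Fin n → ZMod 2) : pr (lift x) = x := by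
  ext i
  simp [pr_apply, lift]

lemma pr_eq_zero_iff {v : Fin (n + 1) → ZMod 2} : pr v = 0 ↔ ∀ i, v i = v (Fin.last n) := by
  refine ⟨fun h i => ?_, fun h => by ext i; simp [pr_apply, h]⟩
  cases i using Fin.lastCases with
  | last => rfl
  | cast i => simpa [pr_apply, sub_eq_zero] using congrFun h i

lemma sub_apply_eq_of_pr_eq {v w : Fin (n + 1) → ZMod 2} (h : pr v = pr w) (i : Fin (n + 1)) :
    (v - w) i = (v - w) (Fin.last n) :=
  pr_eq_zero_iff.mp (by rw [map_sub, h, sub_self]) i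

lemma eq_of_pr_eq {v w : Fin (n + 1) → ZMod 2} (h : pr v = pr w) {i : Fin (n + 1)}
    (hi : v i = w i) : v = w := by
  have hlast : (v - w) (Fin.last n) = 0 := by
    rw [← sub_apply_eq_of_pr_eq h i, Pi.sub_apply, hi, sub_self]
  ext k
  simpa [sub_eq_zero] using (sub_apply_eq_of_pr_eq h k).trans hlast

lemma eq_or_eq_add_one_of_pr_eq {v w : Fin (n + 1) → ZMod 2} (h : pr v = pr w) :
    v = w ∨ v = w + 1 := by
  rcases (by decide : ∀ a : ZMod 2, a = 0 ∨ a = 1) ((v - w) (Fin.last n)) with h0 | h1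
  · left; ext k; simpa [h0, sub_eq_zero] using sub_apply_eq_of_pr_eq h k
  · right; ext k; simpa [h1, sub_eq_iff_eq_add'] using sub_apply_eq_of_pr_eq h k

lemma pr_comp_congr {v w : Fin (n + 1) → ZMod 2} (h : pr v = pr w)
    (τ : Fin (n + 1) → Fin (n + 1)) : pr (v ∘ τ) = pr (w ∘ τ) := by
  rw [← sub_eq_zero, ← map_sub, pr_eq_zero_iff]
  exact fun i => (sub_apply_eq_of_pr_eq h (τ i)).trans (sub_apply_eq_of_pr_eq h _).symm

def gen (i : Fin (n + 1)) : Fin n → ZMod 2 := pr (Pi.single i 1)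

lemma gen_castSucc (i : Fin n) : gen i.castSucc = Pi.single i 1 := by
  ext k
  simp [gen, pr_apply, Pi.single_apply, Fin.castSucc_ne_last]

lemma gen_last : gen (Fin.last n) = 1 := by
  ext k
  simp [gen, pr_apply, Fin.castSucc_ne_last, ZMod.neg_eq_self_mod_two]

lemma exists_eq_gen_iff {x : Fin n → ZMod 2} :
    (∃ i, x = gen i) ↔ hammingNorm x = 1 ∨ hammingNorm x = n := by
  have hcard : hammingNorm x = n ↔ x = 1 := by simpa using hammingNorm_eq_card_iff (x := x)
  rw [hammingNorm_eq_one_iff, hcard]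
  simp only [Fin.exists_fin_succ', gen_castSucc, gen_last]

lemma adj_iff {x y : Fin n → ZMod 2} : (FQ n).Adj x y ↔ x ≠ y ∧ ∃ i, y = x + gen i := by
  rw [FQ, SimpleGraph.fromRel_adj, hammingDist_comm y x, or_self, hammingDist_comm,
    hammingDist_eq_hammingNorm, ← exists_eq_gen_iff]
  refine and_congr_right fun _ => exists_congr fun i => ?_
  rw [neg_add_eq_sub, ← neg_sub, ZModModule.neg_eq_self, sub_eq_iff_eq_add']

lemma gen_ne_zero (hn : 1 ≤ n) (i : Fin (n + 1)) : gen i ≠ 0 := by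
  obtain ⟨k, hk⟩ := exists_notMem_of_card_lt (s := {i}) (by simp; omega)
  rw [mem_singleton] at hk
  intro h
  rw [gen, ← map_zero pr] at h
  simpa using congrFun (eq_of_pr_eq h (i := k) (by simp [hk])) i

lemma gen_injective (hn : 2 ≤ n) : Function.Injective (gen (n := n)) := by
  intro i j h
  obtain ⟨k, hk⟩ := exists_notMem_of_card_lt (s := {i, j})
    (card_le_two.trans_lt (by simp; omega))
  simp only [mem_insert, mem_singleton, not_or] at hk
  by_contra hij
  simpa [Pi.single_apply, hij] using congrFun (eq_of_pr_eq h (i := k) (by simp [hk])) i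

lemma eq_or_eq_of_gen_add_gen_eq (hn : 4 ≤ n) {j j' a b : Fin (n + 1)} (hjj' : j ≠ j')
    (h : gen j + gen a = gen j' + gen b) : a = j ∨ a = j' := by
  -- Since `n + 1 > 4`, both lifts vanish at some coordinate `k`, so they agree on the cube.
  obtain ⟨k, hk⟩ := exists_notMem_of_card_lt (s := {j, a, j', b})
    (card_le_four.trans_lt (by simp; omega))
  simp only [mem_insert, mem_singleton, not_or] at hk
  have hsum : (Pi.single j 1 + Pi.single a 1 : Fin (n + 1) → ZMod 2) =
      Pi.single j' 1 + Pi.single b 1 :=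
    eq_of_pr_eq (by simpa [gen] using h) (i := k) (by simp [hk])
  by_contra! ha
  have hab : a = b := by simpa [Pi.single_apply, ha.1, ha.2, eq_comm] using congrFun hsum a
  simpa [Pi.single_apply, ha.1.symm, hjj'.symm, hab] using congrFun hsum j

lemma adj_add_gen (hn : 1 ≤ n) (x : Fin n → ZMod 2) (i : Fin (n + 1)) :
    (FQ n).Adj x (x + gen i) :=
  adj_iff.mpr ⟨by simpa using gen_ne_zero hn i, i, rfl⟩

lemma eq_or_eq_of_adj_add_gen (hn : 4 ≤ n) {x y : Fin n → ZMod 2} {j j' : Fin (n + 1)}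
    (hjj' : j ≠ j') (h : (FQ n).Adj (x + gen j) y) (h' : (FQ n).Adj (x + gen j') y) :
    y = x ∨ y = x + gen j + gen j' := by
  obtain ⟨-, a, rfl⟩ := adj_iff.mp h
  obtain ⟨-, b, hb⟩ := adj_iff.mp h'
  rw [add_assoc, add_assoc, add_right_inj] at hb
  rcases eq_or_eq_of_gen_add_gen_eq hn hjj' hb with rfl | rfl
  · simp [add_assoc, ZModModule.add_self]
  · exact Or.inr rfl

lemma exists_sum_gen (x : Fin n → ZMod 2) :
    ∃ s : Finset (Fin (n + 1)), ∑ i ∈ s, gen i = x := by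
  refine ⟨({i | x i ≠ 0} : Finset (Fin n)).map Fin.castSuccEmb, ?_⟩
  rw [sum_map, sum_filter]
  conv_rhs => rw [← univ_sum_single x]
  refine sum_congr rfl fun i _ => ?_
  rw [Fin.coe_castSuccEmb, gen_castSucc]
  split_ifs with h
  · rw [zmod_two_ne_zero_iff_eq_one.mp h]
  · rw [not_not.mp h, Pi.single_zero]

lemma apply_add_gen_add_gen (hn : 4 ≤ n) (ψ : FQ n ≃g FQ n) {y : Fin n → ZMod 2}
    {j j' : Fin (n + 1)} (hjj' : j ≠ j') (hy : ψ y = y) (hj : ψ (y + gen j) = y + gen j)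
    (hj' : ψ (y + gen j') = y + gen j') : ψ (y + gen j + gen j') = y + gen j + gen j' := by
  have hn1 : 1 ≤ n := by omega
  have h := ψ.map_adj_iff.mpr (adj_add_gen hn1 (y + gen j) j')
  have h' := ψ.map_adj_iff.mpr (adj_add_gen hn1 (y + gen j') j)
  rw [hj] at h
  rw [hj', add_right_comm] at h'
  refine (eq_or_eq_of_adj_add_gen hn hjj' h h').resolve_left fun hψ => hjj' ?_
  have hsum := ψ.injective (hψ.trans hy.symm)
  rw [add_assoc, add_eq_left, add_eq_zero_iff_eq_neg, ZModModule.neg_eq_self] at hsum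
  exact gen_injective (by omega) hsum

theorem apply_eq_self_of_fix_zero_gen (hn : 4 ≤ n) (ψ : FQ n ≃g FQ n) (h0 : ψ 0 = 0)
    (hgen : ∀ i, ψ (gen i) = gen i) (x : Fin n → ZMod 2) : ψ x = x := by
  obtain ⟨s, rfl⟩ := exists_sum_gen x
  induction s using Finset.strongInduction with
  | H s ih =>
  rcases Nat.lt_or_ge 1 #s with hs | hs
  · obtain ⟨j, hj, j', hj', hjj'⟩ := one_lt_card.mp hs
    have hj'j : j' ∈ s.erase j := mem_erase.mpr ⟨hjj'.symm, hj'⟩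
    have hjj : j ∈ s.erase j' := mem_erase.mpr ⟨hjj', hj⟩
    set y := ∑ i ∈ (s.erase j).erase j', gen i
    have hsj : ∑ i ∈ s.erase j, gen i = y + gen j' := by
      rw [← add_sum_erase _ _ hj'j, add_comm]
    have hsj' : ∑ i ∈ s.erase j', gen i = y + gen j := by
      rw [← add_sum_erase _ _ hjj, add_comm, erase_right_comm]
    have hs : ∑ i ∈ s, gen i = y + gen j + gen j' := by
      rw [← add_sum_erase _ _ hj, hsj]; abel
    rw [hs]
    refine apply_add_gen_add_gen hn ψ hjj'
      (ih _ ((erase_ssubset hj'j).trans (erase_ssubset hj))) ?_ ?_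
    · rw [← hsj']; exact ih _ (erase_ssubset hj')
    · rw [← hsj]; exact ih _ (erase_ssubset hj)
  · rcases Nat.le_one_iff_eq_zero_or_eq_one.mp hs with hs | hs
    · rw [card_eq_zero.mp hs, sum_empty, h0]
    · obtain ⟨a, rfl⟩ := card_eq_one.mp hs
      rw [sum_singleton, hgen]

/-- The permutation `σ` of the cube coordinates, descended along `pr`. -/
def permHom (σ : Equiv.Perm (Fin (n + 1))) : (Fin n → ZMod 2) →+ (Fin n → ZMod 2) :=
  pr.comp ((LinearMap.funLeft (ZMod 2) (ZMod 2) σ.symm).toAddMonoidHom.comp lift)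

lemma permHom_apply (σ : Equiv.Perm (Fin (n + 1))) (x : Fin n → ZMod 2) :
    permHom σ x = pr (lift x ∘ σ.symm) := rfl

lemma permHom_pr (σ : Equiv.Perm (Fin (n + 1))) (v : Fin (n + 1) → ZMod 2) :
    permHom σ (pr v) = pr (v ∘ σ.symm) :=
  pr_comp_congr (pr_lift _) _

lemma permHom_gen (σ : Equiv.Perm (Fin (n + 1))) (i : Fin (n + 1)) :
    permHom σ (gen i) = gen (σ i) := by
  rw [gen, permHom_pr, Pi.single_comp_equiv, Equiv.symm_symm, gen]

lemma permHom_symm_permHom (σ : Equiv.Perm (Fin (n + 1))) :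
    Function.LeftInverse (permHom σ.symm) (permHom σ) := fun x => by
  rw [permHom_apply σ, permHom_pr, Equiv.symm_symm, Function.comp_assoc, Equiv.symm_comp_self,
    Function.comp_id, pr_lift]

lemma exists_add_gen_permHom (σ : Equiv.Perm (Fin (n + 1))) {x y : Fin n → ZMod 2}
    (h : ∃ i, y = x + gen i) : ∃ i, permHom σ y = permHom σ x + gen i := by
  obtain ⟨i, rfl⟩ := h
  exact ⟨σ i, by rw [map_add, permHom_gen]⟩

def permIso (σ : Equiv.Perm (Fin (n + 1))) : FQ n ≃g FQ n where
  toFun := permHom σ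
  invFun := permHom σ.symm
  left_inv := permHom_symm_permHom σ
  right_inv := σ.symm_symm ▸ permHom_symm_permHom σ.symm
  map_rel_iff' {x y} := by
    simp only [Equiv.coe_fn_mk, adj_iff]
    refine and_congr (permHom_symm_permHom σ).injective.ne_iff
      ⟨fun h => ?_, exists_add_gen_permHom σ⟩
    simpa only [permHom_symm_permHom σ _] using exists_add_gen_permHom σ.symm h

@[simp]
lemma permIso_apply (σ : Equiv.Perm (Fin (n + 1))) (x : Fin n → ZMod 2) :
    permIso σ x = permHom σ x := rfl

def addIso (a : Fin n → ZMod 2) : FQ n ≃g FQ n where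
  toEquiv := Equiv.addRight a
  map_rel_iff' := by simp [adj_iff, add_right_comm _ a]

theorem exists_eq_permIso (hn : 4 ≤ n) (φ : FQ n ≃g FQ n) (h0 : φ 0 = 0) :
    ∃ σ, φ = permIso σ := by
  have hgen (i : Fin (n + 1)) : ∃ j, φ (gen i) = gen j := by
    have := φ.map_adj_iff.mpr (adj_add_gen (by omega) 0 i)
    rw [h0, zero_add] at this
    obtain ⟨-, j, hj⟩ := adj_iff.mp this
    exact ⟨j, by rw [hj, zero_add]⟩
  choose f hf using hgen
  have hf_inj : f.Injective := fun a b hab =>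
    gen_injective (by omega) (φ.injective (by rw [hf, hf, hab]))
  let σ := Equiv.ofBijective f hf_inj.bijective_of_finite
  refine ⟨σ, RelIso.ext fun x => ?_⟩
  have hψ := apply_eq_self_of_fix_zero_gen hn (φ.trans (permIso σ).symm)
    (by simp [RelIso.symm_apply_eq, h0]) (fun i => ?_) x
  · rwa [RelIso.trans_apply, RelIso.symm_apply_eq] at hψ
  · rw [RelIso.trans_apply, RelIso.symm_apply_eq, hf, permIso_apply, permHom_gen]
    rfl

theorem succ_le_two_pow_ncard_diff_zero (hn : 2 ≤ n) {S : Set (Fin n → ZMod 2)}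
    (hS : IsDeterminingSet (FQ n) S) : n + 1 ≤ 2 ^ (S \ {0}).ncard := by
  classical
  by_contra! h
  obtain ⟨i, i', hii', hcol⟩ := Fintype.exists_ne_map_eq_of_card_lt
    (fun i (t : ↥(S \ {0})) => lift (t : Fin n → ZMod 2) i)
    (by rw [← Nat.card_eq_fintype_card, ← Nat.card_eq_fintype_card, Nat.card_fun,
      Nat.card_coe_set_eq, Nat.card_zmod, Nat.card_fin]; omega)
  have hfix : ∀ s ∈ S, permIso (Equiv.swap i i') s = s := by
    intro s hs
    rcases eq_or_ne s 0 with rfl | hs0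
    · exact map_zero (permHom _)
    · rw [permIso_apply, permHom_apply, Equiv.symm_swap,
        comp_swap_eq_self (congrFun hcol ⟨s, hs, hs0⟩), pr_lift]
  have := hS _ hfix (gen i)
  rw [permIso_apply, permHom_gen, Equiv.swap_apply_left] at this
  exact hii' (gen_injective hn this).symm

theorem clog_add_one_le_ncard (hn : 2 ≤ n) {S : Set (Fin n → ZMod 2)}
    (hS : IsDeterminingSet (FQ n) S) : Nat.clog 2 (n + 1) + 1 ≤ S.ncard := by
  rcases S.eq_empty_or_nonempty with rfl | ⟨s₀, hs₀⟩
  · have := succ_le_two_pow_ncard_diff_zero hn hS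
    simp at this
    omega
  · have h0 : (0 : Fin n → ZMod 2) ∈ addIso s₀ '' S :=
      ⟨s₀, hs₀, ZModModule.add_self s₀⟩
    have hcard := succ_le_two_pow_ncard_diff_zero hn (hS.image (addIso s₀))
    rw [Set.ncard_sdiff_singleton_of_mem h0,
      Set.ncard_image_of_injective _ (addIso s₀).injective] at hcard
    have := Nat.clog_le_of_le_pow hcard
    have := (Set.ncard_pos S.toFinite).mpr ⟨s₀, hs₀⟩
    omega

def bitVec {m : ℕ} (j : ℕ) : Fin m → ZMod 2 := fun i => if (i : ℕ).testBit j then 1 else 0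

lemma eq_of_forall_bitVec_eq {m k : ℕ} (hm : m ≤ 2 ^ k) {a b : Fin m}
    (h : ∀ j < k, bitVec j a = bitVec j b) : a = b := by
  refine Fin.ext (Nat.eq_of_testBit_eq fun j => ?_)
  rcases lt_or_ge j k with hj | hj
  · have := h j hj
    simp only [bitVec] at this
    cases ha : (a : ℕ).testBit j <;> cases hb : (b : ℕ).testBit j <;> simp_all
  · have hpow := hm.trans (Nat.pow_le_pow_right two_pos hj)
    rw [Nat.testBit_eq_false_of_lt (a.isLt.trans_le hpow),
      Nat.testBit_eq_false_of_lt (b.isLt.trans_le hpow)]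

def bitVecSet (n k : ℕ) : Finset (Fin n → ZMod 2) :=
  insert 0 ((range k).image fun j => pr (bitVec j))

lemma card_bitVecSet_le (n k : ℕ) : #(bitVecSet n k) ≤ k + 1 :=
  (card_insert_le _ _).trans (by grw [card_image_le, card_range])

theorem isDeterminingSet_bitVecSet (hn : 4 ≤ n) (he : Even n) {k : ℕ} (hk : n + 1 ≤ 2 ^ k) :
    IsDeterminingSet (FQ n) (bitVecSet n k) := by
  intro φ hφ x
  obtain ⟨σ, rfl⟩ := exists_eq_permIso hn φ (hφ 0 (by simp [bitVecSet]))
  have hbit (j : ℕ) (hj : j < k) : bitVec j ∘ σ.symm = bitVec j := by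
    have := hφ (pr (bitVec j)) (by simp [bitVecSet]; exact Or.inr ⟨j, hj, rfl⟩)
    rw [permIso_apply, permHom_pr] at this
    exact (eq_or_eq_add_one_of_pr_eq this).resolve_right
      (comp_ne_add_one (by simpa using he.add_one) _ _)
  have hσ (i : Fin (n + 1)) : σ.symm i = i :=
    eq_of_forall_bitVec_eq hk fun j hj => congrFun (hbit j hj) i
  have hlift : lift x ∘ σ.symm = lift x := funext fun i => by simp [hσ]
  rw [permIso_apply, permHom_apply, hlift, pr_lift]

end FoldedCube

theorem stmt13_general (n : ℕ) (hn : 4 ≤ n) (he : Even n) :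
    detNum (FQ n) = Nat.clog 2 (n + 1) + 1 := by
  refine detNum_eq_of_le_of_forall_le
    (FoldedCube.isDeterminingSet_bitVecSet hn he (Nat.le_pow_clog one_lt_two (n + 1))) ?_
    fun T hT => FoldedCube.clog_add_one_le_ncard (by omega) hT
  rw [Set.ncard_coe_finset]
  exact FoldedCube.card_bitVecSet_le n _

/-- For even `n ≥ 4` not of the form `2^m - 1` or `2^m - 3`,
`det(FQ_n) = ⌈lg(n+1)⌉ + 1`. -/
theorem stmt13 (n : ℕ) (hn : 4 ≤ n) (he : Even n)
    (h1 : ¬∃ m : ℕ, n = 2 ^ m - 1) (h3 : ¬∃ m : ℕ, n = 2 ^ m - 3) :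
    detNum (FQ n) = Nat.clog 2 (n + 1) + 1 :=
  stmt13_general n hn he
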